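/- arXiv:2410.05490 — 9 statements merged into one kernel-verified Lean document; each statement's English description precedes it below -/
import Mathlib

section
/- For all real numbers y and v, |y·v| ≤ (λ/2)·y·sinh(y) + v·arsinh(v/λ), where λ > 0. -/
open Real

lemma my_aux1 (u : ℝ) (hu : 0 ≤ u) : Real.sinh u ≤ u * Real.cosh u := by
  have h : MonotoneOn (fun x : ℝ => x * Real.cosh x - Real.sinh x) (Set.Ici 0) := by
    apply monotoneOn_of_deriv_nonneg (convex_Ici 0)
    · exact ((continuous_id.mul Real.continuous_cosh).sub Real.continuous_sinh).continuousOn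
    · intro x _
      exact (((hasDerivAt_id x).mul (Real.hasDerivAt_cosh x)).sub
        (Real.hasDerivAt_sinh x)).differentiableAt.differentiableWithinAt
    · intro x hx
      rw [interior_Ici] at hx
      have hd : HasDerivAt (fun x : ℝ => x * Real.cosh x - Real.sinh x)
          (1 * Real.cosh x + x * Real.sinh x - Real.cosh x) x :=
        ((hasDerivAt_id x).mul (Real.hasDerivAt_cosh x)).sub (Real.hasDerivAt_sinh x)
      rw [hd.deriv]
      have hx' : (0:ℝ) < x := hx
      have := Real.sinh_nonneg_iff.mpr hx'.le
      nlinarith [mul_nonneg hx'.le this]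
  have := h (Set.self_mem_Ici) (Set.mem_Ici.mpr hu) hu
  simp only [Real.cosh_zero, Real.sinh_zero] at this
  linarith

lemma my_aux2 (y : ℝ) (hy : 0 ≤ y) : Real.cosh y - 1 ≤ (1/2) * y * Real.sinh y := by
  have h1 : Real.sinh (y/2) ≤ (y/2) * Real.cosh (y/2) := my_aux1 _ (by linarith)
  have h2 : 0 ≤ Real.sinh (y/2) := Real.sinh_nonneg_iff.mpr (by linarith)
  have hc : Real.cosh y = 2 * Real.sinh (y/2)^2 + 1 := by
    have := Real.cosh_sq (y/2)
    have h := Real.cosh_two_mul (y/2)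
    rw [show 2 * (y/2) = y by ring] at h
    rw [h, this]; ring
  have hs : Real.sinh y = 2 * Real.sinh (y/2) * Real.cosh (y/2) := by
    have h := Real.sinh_two_mul (y/2)
    rw [show 2 * (y/2) = y by ring] at h
    linarith
  rw [hc, hs]
  nlinarith

lemma my_aux3 (a t : ℝ) (ha : 0 ≤ a) :
    t * Real.sinh a ≤ Real.cosh (a + t) - Real.cosh a := by
  rw [Real.cosh_add]
  have hsa : 0 ≤ Real.sinh a := Real.sinh_nonneg_iff.mpr ha
  have hca : 0 < Real.cosh a := Real.cosh_pos a
  have hct : 1 ≤ Real.cosh t := Real.one_le_cosh t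
  have hsc : Real.sinh a ≤ Real.cosh a := by
    have := Real.cosh_sub_sinh a
    nlinarith [Real.exp_pos (-a)]
  rcases le_or_gt 0 t with ht | ht
  · have : t ≤ Real.sinh t := Real.self_le_sinh_iff.mpr ht
    nlinarith
  · have h1 : Real.sinh t ≤ t := by
      have := Real.self_le_sinh_iff.mpr (le_of_lt (neg_pos.mpr ht))
      rw [Real.sinh_neg] at this; linarith
    have h2 : t + 1 ≤ Real.exp t := Real.add_one_le_exp t
    have h3 := Real.sinh_add_cosh t
    nlinarith

lemma my_core (a z : ℝ) (ha : 0 ≤ a) (hz : 0 ≤ z) :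
    z * Real.sinh a ≤ (1/2) * z * Real.sinh z + a * Real.sinh a := by
  have h1 := my_aux3 a (z - a) ha
  rw [show a + (z - a) = z by ring] at h1
  have h2 := my_aux2 z hz
  have h3 : 1 ≤ Real.cosh a := Real.one_le_cosh a
  nlinarith

theorem stmt_0 (lam : ℝ) (hlam : 0 < lam) (y v : ℝ) :
    |y * v| ≤ (lam / 2) * y * Real.sinh y + v * Real.arsinh (v / lam) := by
  set a := Real.arsinh (|v| / lam) with hadef
  have ha : 0 ≤ a := Real.arsinh_nonneg_iff.mpr (by positivity)
  have hsa : Real.sinh a = |v| / lam := Real.sinh_arsinh _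
  have hys : (lam / 2) * y * Real.sinh y = (lam / 2) * |y| * Real.sinh |y| := by
    rcases abs_cases y with ⟨h, _⟩ | ⟨h, _⟩ <;> rw [h] <;> simp [Real.sinh_neg]
  have hvs : v * Real.arsinh (v / lam) = |v| * a := by
    rcases abs_cases v with ⟨h, _⟩ | ⟨h, _⟩
    · rw [hadef, h]
    · rw [hadef, h, show -v / lam = -(v / lam) by ring, Real.arsinh_neg]; ring
  rw [abs_mul, hys, hvs]
  have hc := my_core a |y| ha (abs_nonneg y)
  rw [hsa] at hc
  have h2 : |y| * (|v| / lam) ≤ (1/2) * |y| * Real.sinh |y| + a * (|v| / lam) := hc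
  have := mul_le_mul_of_nonneg_left h2 (le_of_lt hlam)
  calc |y| * |v| = lam * (|y| * (|v| / lam)) := by field_simp
    _ ≤ lam * ((1/2) * |y| * Real.sinh |y| + a * (|v| / lam)) := this
    _ = (lam / 2) * |y| * Real.sinh |y| + |v| * a := by field_simp
end

section
/- Let λ > 0, γ ≥ 2/λ, and consider the system ẋ = λ·sinh(u − x) with output y = u − x, where u is continuously differentiable. Then the storage function V(t) = (γ/2)·y(t)² satisfies d/dt V(t) ≤ γ·u̇(t)·arsinh(u̇(t)/λ) − y(t)·sinh(y(t)) for all t. -/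
open Real

private lemma ysy (x : ℝ) : 0 ≤ x * Real.sinh x := by
  rcases le_or_gt 0 x with h | h
  · exact mul_nonneg h (Real.sinh_nonneg_iff.2 h)
  · nlinarith [Real.sinh_nonpos_iff.2 h.le]

private lemma sinh_le_mul_cosh (x : ℝ) (hx : 0 ≤ x) : Real.sinh x ≤ x * Real.cosh x := by
  have hmono : MonotoneOn (fun y : ℝ => y * Real.cosh y - Real.sinh y) (Set.Ici 0) := by
    apply monotoneOn_of_deriv_nonneg (convex_Ici 0)
    · fun_prop
    · intro y hy
      exact ((hasDerivAt_id y).mul (Real.hasDerivAt_cosh y)).sub (Real.hasDerivAt_sinh y)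
        |>.differentiableAt.differentiableWithinAt
    · intro y hy
      have hd : HasDerivAt (fun y : ℝ => y * Real.cosh y - Real.sinh y)
          (1 * Real.cosh y + y * Real.sinh y - Real.cosh y) y :=
        ((hasDerivAt_id y).mul (Real.hasDerivAt_cosh y)).sub (Real.hasDerivAt_sinh y)
      rw [hd.deriv]
      nlinarith [ysy y]
  have := hmono (Set.self_mem_Ici) (Set.mem_Ici.2 hx) hx
  simpa using this

private lemma cosh_ineq (a : ℝ) : 2 * (Real.cosh a - 1) ≤ a * Real.sinh a := by
  wlog ha : 0 ≤ a with H
  · have := H (-a) (by linarith)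
    simpa using this
  have hmono : MonotoneOn (fun y : ℝ => y * Real.sinh y - 2 * Real.cosh y) (Set.Ici 0) := by
    apply monotoneOn_of_deriv_nonneg (convex_Ici 0)
    · fun_prop
    · intro y hy
      exact (((hasDerivAt_id y).mul (Real.hasDerivAt_sinh y)).sub
        ((Real.hasDerivAt_cosh y).const_mul 2)).differentiableAt.differentiableWithinAt
    · intro y hy
      have hd : HasDerivAt (fun y : ℝ => y * Real.sinh y - 2 * Real.cosh y)
          (1 * Real.sinh y + y * Real.cosh y - 2 * Real.sinh y) y :=
        ((hasDerivAt_id y).mul (Real.hasDerivAt_sinh y)).sub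
          ((Real.hasDerivAt_cosh y).const_mul 2)
      rw [hd.deriv]
      have := sinh_le_mul_cosh y (le_of_lt (by simpa using hy))
      linarith
  have := hmono (Set.self_mem_Ici) (Set.mem_Ici.2 ha) ha
  simp only [zero_mul, Real.sinh_zero, Real.cosh_zero] at this
  linarith

private lemma tangent (a t : ℝ) (ht : 0 ≤ t) :
    (a - t) * Real.sinh t ≤ Real.cosh a - Real.cosh t := by
  have hx : Real.cosh a = Real.cosh t * Real.cosh (a - t) + Real.sinh t * Real.sinh (a - t) := by
    rw [← Real.cosh_add]; ring_nf
  have h1 : 0 ≤ Real.sinh t := Real.sinh_nonneg_iff.2 ht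
  have h2 : Real.sinh t ≤ Real.cosh t := by
    nlinarith [Real.cosh_add_sinh (-t), Real.exp_pos (-t), Real.cosh_neg t, Real.sinh_neg t]
  have h3 : 1 ≤ Real.cosh (a - t) := Real.one_le_cosh _
  have h4 : (a - t) + 1 ≤ Real.exp (a - t) := Real.add_one_le_exp _
  have h5 : Real.cosh (a - t) + Real.sinh (a - t) = Real.exp (a - t) := Real.cosh_add_sinh _
  nlinarith [mul_nonneg (sub_nonneg.2 h2) (sub_nonneg.2 h3),
    mul_nonneg h1 (by linarith : (0:ℝ) ≤ Real.cosh (a - t) - 1 + (Real.sinh (a - t) - (a - t)))]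

private lemma young2 (y c : ℝ) : y * c ≤ (Real.cosh y - 1) + c * Real.arsinh c := by
  have key : ∀ b : ℝ, 0 ≤ b → |y| * b ≤ (Real.cosh y - 1) + b * Real.arsinh b := by
    intro b hb
    have ht : 0 ≤ Real.arsinh b := Real.arsinh_nonneg_iff.2 hb
    have htan := tangent |y| (Real.arsinh b) ht
    rw [Real.sinh_arsinh, Real.cosh_abs] at htan
    have hcosh : 1 ≤ Real.cosh (Real.arsinh b) := Real.one_le_cosh _
    nlinarith
  have hc : c * Real.arsinh c = |c| * Real.arsinh |c| := by
    rcases le_or_gt 0 c with h | h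
    · rw [abs_of_nonneg h]
    · rw [abs_of_neg h, Real.arsinh_neg]; ring
  calc y * c ≤ |y * c| := le_abs_self _
    _ = |y| * |c| := abs_mul _ _
    _ ≤ (Real.cosh y - 1) + |c| * Real.arsinh |c| := key |c| (abs_nonneg c)
    _ = (Real.cosh y - 1) + c * Real.arsinh c := by rw [hc]

theorem stmt_4 (lam gam : ℝ) (hlam : 0 < lam) (hgam : 2 / lam ≤ gam)
    (u x u' : ℝ → ℝ)
    (hu : ∀ t, HasDerivAt u (u' t) t)
    (hx : ∀ t, HasDerivAt x (lam * Real.sinh (u t - x t)) t) :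
    ∀ t, 0 ≤ t →
      deriv (fun s => (gam / 2) * (u s - x s) ^ 2) t
        ≤ gam * u' t * Real.arsinh (u' t / lam) - (u t - x t) * Real.sinh (u t - x t) := by
  intro t ht
  set y := u t - x t with hy
  set d := u' t with hd
  have hgl : 2 ≤ gam * lam := by
    rw [div_le_iff₀ hlam] at hgam; linarith
  have hg0 : 0 < gam := by nlinarith
  have hder : HasDerivAt (fun s => (gam / 2) * (u s - x s) ^ 2)
      (gam / 2 * ((2 : ℕ) * (u t - x t) ^ (2 - 1) * (u' t - lam * Real.sinh (u t - x t)))) t :=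
    (((hu t).sub (hx t)).pow 2).const_mul (gam / 2)
  rw [hder.deriv]
  have h1 : y * d ≤ lam * (Real.cosh y - 1) + d * Real.arsinh (d / lam) := by
    have h := young2 y (d / lam)
    have h' := mul_le_mul_of_nonneg_left h hlam.le
    have : lam * (y * (d / lam)) = y * d := by field_simp
    rw [this] at h'
    have h2 : lam * (Real.cosh y - 1 + d / lam * Real.arsinh (d / lam))
        = lam * (Real.cosh y - 1) + d * Real.arsinh (d / lam) := by field_simp
    linarith [h2 ▸ h']
  have hC := cosh_ineq y
  have hS := ysy y
  norm_num [← hy, ← hd]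
  have A1 := mul_le_mul_of_nonneg_left h1 hg0.le
  have A2 := mul_le_mul_of_nonneg_left hC (mul_nonneg hg0.le hlam.le)
  have A3 := mul_nonneg (by linarith : (0:ℝ) ≤ gam * lam - 2) hS
  clear_value y d
  nlinarith [A1, A2, A3]
end

section
/- Let λ > 0 and consider ẋ = λ·sinh(u − x), y = u − x with u continuously differentiable. There exists A > 0 such that the storage function V(t) = 2A·cosh(y(t)) satisfies d/dt V(t) ≤ 4·u̇(t)² − ẏ(t)² for all t. -/
theorem stmt_5 (lam : ℝ) (hlam : 0 < lam) (u x u' : ℝ → ℝ)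
    (hu : ∀ t, HasDerivAt u (u' t) t)
    (hx : ∀ t, HasDerivAt x (lam * Real.sinh (u t - x t)) t) :
    ∃ A : ℝ, 0 < A ∧ ∀ t, 0 ≤ t →
      deriv (fun s => 2 * A * Real.cosh (u s - x s)) t
        ≤ 4 * (u' t) ^ 2 - (u' t - lam * Real.sinh (u t - x t)) ^ 2 := by
  refine ⟨2 * lam, by positivity, fun t _ => ?_⟩
  have hy : HasDerivAt (fun s => u s - x s)
      (u' t - lam * Real.sinh (u t - x t)) t := (hu t).sub (hx t)
  have hd : HasDerivAt (fun s => 2 * (2 * lam) * Real.cosh (u s - x s))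
      (2 * (2 * lam) * (Real.sinh (u t - x t) *
        (u' t - lam * Real.sinh (u t - x t)))) t := (hy.cosh).const_mul _
  rw [hd.deriv]
  set s := Real.sinh (u t - x t)
  set v := u' t
  nlinarith [sq_nonneg (v - lam * s), sq_nonneg (v + lam * s), sq_nonneg v, sq_nonneg (lam * s)]
end

section
/- Let λ > 0 and consider the system ẋ = λ·(u − x)³ with output y = u − x, where u is continuously differentiable. Then the storage function V(t) = (2/(3λ))·y(t)² satisfies d/dt V(t) ≤ (1/λ)^{4/3}·|u̇(t)|^{4/3} − y(t)⁴ for all t. -/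
/-!
With `y = u - x` one has `ẏ = u̇ - λ y³`, so `V̇ = (4 / (3λ)) y u̇ - (4/3) y⁴`. Young's inequality
with the conjugate exponents `4` and `4/3`, applied to `y` and `u̇ / λ`, bounds the cross term by
`y⁴ / 3 + (1/λ)^{4/3} |u̇|^{4/3}`, which leaves exactly `-y⁴` from the dissipative term.
-/

open Real

lemma mul_le_pow_four_div_four_add_abs_rpow (y w : ℝ) :
    y * w ≤ y ^ 4 / 4 + 3 / 4 * |w| ^ ((4 : ℝ) / 3) := by
  have hconj : (4 : ℝ).HolderConjugate (4 / 3) := by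
    rw [Real.holderConjugate_iff]; norm_num
  have hyoung := Real.young_inequality y w hconj
  have hy4 : |y| ^ (4 : ℝ) = y ^ 4 := by
    rw [show (4 : ℝ) = ((4 : ℕ) : ℝ) by norm_num, Real.rpow_natCast, pow_abs,
      abs_of_nonneg (by positivity)]
  rw [hy4] at hyoung
  linarith

lemma cubic_highPass_dissipation (lam : ℝ) (hlam : 0 < lam) (y v : ℝ) :
    4 / (3 * lam) * y * (v - lam * y ^ 3)
      ≤ (1 / lam) ^ ((4 : ℝ) / 3) * |v| ^ ((4 : ℝ) / 3) - y ^ 4 := by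
  have hyoung := mul_le_pow_four_div_four_add_abs_rpow y (v / lam)
  have hscale : |v / lam| ^ ((4 : ℝ) / 3) = (1 / lam) ^ ((4 : ℝ) / 3) * |v| ^ ((4 : ℝ) / 3) := by
    rw [abs_div, abs_of_pos hlam, Real.div_rpow (abs_nonneg v) hlam.le,
      Real.div_rpow zero_le_one hlam.le, Real.one_rpow]
    ring
  have hlhs : 4 / (3 * lam) * y * (v - lam * y ^ 3) = 4 / 3 * (y * (v / lam)) - 4 / 3 * y ^ 4 := by
    field_simp
  rw [hlhs, ← hscale]
  linarith

lemma hasDerivAt_storage (lam : ℝ) (u x u' : ℝ → ℝ) (t : ℝ)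
    (hu : HasDerivAt u (u' t) t) (hx : HasDerivAt x (lam * (u t - x t) ^ 3) t) :
    HasDerivAt (fun s => (2 / (3 * lam)) * (u s - x s) ^ 2)
      (4 / (3 * lam) * (u t - x t) * (u' t - lam * (u t - x t) ^ 3)) t := by
  have hy : HasDerivAt (fun s => u s - x s) (u' t - lam * (u t - x t) ^ 3) t := hu.sub hx
  exact ((hy.pow 2).const_mul _).congr_deriv (by norm_num; ring)

theorem stmt_6 (lam : ℝ) (hlam : 0 < lam) (u x u' : ℝ → ℝ)
    (hu : ∀ t, HasDerivAt u (u' t) t)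
    (hx : ∀ t, HasDerivAt x (lam * (u t - x t) ^ 3) t) :
    ∀ t, 0 ≤ t →
      deriv (fun s => (2 / (3 * lam)) * (u s - x s) ^ 2) t
        ≤ (1 / lam) ^ ((4 : ℝ) / 3) * |u' t| ^ ((4 : ℝ) / 3) - (u t - x t) ^ 4 := by
  intro t _
  rw [(hasDerivAt_storage lam u x u' t (hu t) (hx t)).deriv]
  exact cubic_highPass_dissipation lam hlam (u t - x t) (u' t)
end

section
/- Let 0 < α ≤ β, λ > 0, and φ : ℝ → ℝ continuous with (φ(q) − αq)(φ(q) − βq) ≤ 0 for all q. Consider ẋ = λ·φ(u − x), y = u − x with u continuously differentiable. Then there exist constants A > 0 and γ > 0 such that V(t) = A·y(t)² satisfies d/dt V(t) ≤ γ²·u̇(t)² − y(t)² for all t. -/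
/-!
Along a trajectory the output `y = u - x` satisfies `ẏ = u̇ - λ φ(y)`. Expanding the sector condition
gives `(α + β) y φ(y) ≥ φ(y)² + α β y² ≥ α β y²`, so with `A = (α + β) / (λ α β)` the dissipative
term `-2 A λ y φ(y)` of `d/dt (A y²)` is at most `-2 y²`, and the cross term `2 A y u̇` is absorbed by
`2 A y u̇ ≤ A² u̇² + y²`.
-/

lemma sector_mul_self_le {α β p q : ℝ} (hαβ : 0 < α + β)
    (hsec : (p - α * q) * (p - β * q) ≤ 0) :
    α * β / (α + β) * q ^ 2 ≤ q * p := by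
  have hexpand : p ^ 2 + α * β * q ^ 2 ≤ (α + β) * (q * p) := by nlinarith
  rw [div_mul_eq_mul_div, div_le_iff₀ hαβ]
  nlinarith [sq_nonneg p]

lemma two_mul_mul_sub_le_sq_sub_sq {A y v w : ℝ} (hdiss : y ^ 2 ≤ A * (y * w)) :
    2 * A * y * (v - w) ≤ A ^ 2 * v ^ 2 - y ^ 2 := by
  nlinarith [sq_nonneg (A * v - y)]

theorem stmt_9_general (α β lam : ℝ) (hα : 0 < α) (hαβ : α ≤ β) (hlam : 0 < lam)
    (φ : ℝ → ℝ)
    (hsec : ∀ q, (φ q - α * q) * (φ q - β * q) ≤ 0)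
    (u x u' : ℝ → ℝ)
    (hu : ∀ t, HasDerivAt u (u' t) t)
    (hx : ∀ t, HasDerivAt x (lam * φ (u t - x t)) t) :
    ∃ A γ : ℝ, 0 < A ∧ 0 < γ ∧ ∀ t, 0 ≤ t →
      deriv (fun s => A * (u s - x s) ^ 2) t ≤ γ ^ 2 * (u' t) ^ 2 - (u t - x t) ^ 2 := by
  have hβ : 0 < β := hα.trans_le hαβ
  set A : ℝ := (α + β) / (lam * (α * β)) with hA
  refine ⟨A, A, by positivity, by positivity, fun t _ => ?_⟩
  set y := u t - x t
  have hderiv : HasDerivAt (fun s => A * (u s - x s) ^ 2)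
      (2 * A * y * (u' t - lam * φ y)) t :=
    ((((hu t).sub (hx t)).pow 2).const_mul A).congr_deriv <| by
      simp only [Pi.sub_apply]; push_cast; ring
  have hdiss : y ^ 2 ≤ A * (y * (lam * φ y)) := by
    have hκ := sector_mul_self_le (by positivity : 0 < α + β) (hsec y)
    have hAκ : A * lam * (α * β / (α + β)) = 1 := by
      rw [hA]
      field_simp
    calc y ^ 2 = A * lam * (α * β / (α + β) * y ^ 2) := by rw [← mul_assoc, hAκ, one_mul]
      _ ≤ A * lam * (y * φ y) := by gcongr
      _ = A * (y * (lam * φ y)) := by ring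
  rw [hderiv.deriv]
  exact two_mul_mul_sub_le_sq_sub_sq hdiss

theorem stmt_9 (α β lam : ℝ) (hα : 0 < α) (hαβ : α ≤ β) (hlam : 0 < lam)
    (φ : ℝ → ℝ) (hφ : Continuous φ)
    (hsec : ∀ q, (φ q - α * q) * (φ q - β * q) ≤ 0)
    (u x u' : ℝ → ℝ)
    (hu : ∀ t, HasDerivAt u (u' t) t)
    (hx : ∀ t, HasDerivAt x (lam * φ (u t - x t)) t) :
    ∃ A γ : ℝ, 0 < A ∧ 0 < γ ∧ ∀ t, 0 ≤ t →
      deriv (fun s => A * (u s - x s) ^ 2) t ≤ γ ^ 2 * (u' t) ^ 2 - (u t - x t) ^ 2 :=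
  stmt_9_general α β lam hα hαβ hlam φ hsec u x u' hu hx
end

section
/- Let g₀ > 0 and let F, G : ℝ → ℝ be differentiable with G(0) = F(0) = 0, f = F′, g = G′, g(y) ≥ g₀ for all y, and y·f(y) > 0 for y ≠ 0. Let y solve ÿ + g(y)·ẏ + f(y) = ḋ where d is continuously differentiable. Define ψ(s) = sup_{r∈ℝ} { G(r)·(2s − f(r)) } and V(t) = (ẏ(t) + G(y(t)))² + 4F(y(t)) + ẏ(t)². Then d/dt V(t) ≤ −f(y(t))·G(y(t)) − g₀·ẏ(t)² + ψ(ḋ(t)) + 4·ḋ(t)²/g₀ for all t. -/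
/-!
Substituting the equation of motion `ÿ = ḋ - g(y) ẏ - f(y)` into `dV/dt`, the terms in `f(y) ẏ`
cancel (this is what the `4 F(y)` term is for), leaving
`G(y)(2ḋ - f(y)) - f(y) G(y) + 4 ẏ ḋ - 2 g(y) ẏ²`.
The first term is at most `ψ(ḋ)` by definition of the supremum, and half of the damping
`-2 g(y) ẏ² ≤ -2 g₀ ẏ²` absorbs the cross term `4 ẏ ḋ` by Young's inequality.
-/

theorem four_mul_mul_sub_mul_sq_le {c : ℝ} (hc : 0 < c) (a b : ℝ) :
    4 * (a * b) - c * a ^ 2 ≤ 4 * b ^ 2 / c := by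
  rw [le_div_iff₀ hc]
  nlinarith [sq_nonneg (c * a - 2 * b)]

theorem hasDerivAt_lyapunov {F G f g y y' y'' : ℝ → ℝ} {t : ℝ}
    (hF : HasDerivAt F (f (y t)) (y t)) (hG : HasDerivAt G (g (y t)) (y t))
    (hy : HasDerivAt y (y' t) t) (hy' : HasDerivAt y' (y'' t) t) :
    HasDerivAt (fun s => (y' s + G (y s)) ^ 2 + 4 * F (y s) + (y' s) ^ 2)
      (2 * (y' t + G (y t)) * (y'' t + g (y t) * y' t) + 4 * (f (y t) * y' t)
        + 2 * y' t * y'' t) t := by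
  have hsum : HasDerivAt (fun s => y' s + G (y s)) (y'' t + g (y t) * y' t) t :=
    hy'.add (hG.comp t hy)
  refine (((hsum.pow 2).add ((hF.comp t hy).const_mul 4)).add (hy'.pow 2)).congr_deriv ?_
  ring

theorem stmt_11_general (g0 : ℝ) (hg0 : 0 < g0) (F G f g : ℝ → ℝ)
    (hF : ∀ r, HasDerivAt F (f r) r) (hG : ∀ r, HasDerivAt G (g r) r)
    (hg : ∀ r, g0 ≤ g r)
    (y y' y'' d' : ℝ → ℝ)
    (hy : ∀ t, HasDerivAt y (y' t) t)
    (hy' : ∀ t, HasDerivAt y' (y'' t) t)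
    (hode : ∀ t, y'' t + g (y t) * y' t + f (y t) = d' t)
    (hψ : ∀ s : ℝ, BddAbove (Set.range fun r => G r * (2 * s - f r))) :
    ∀ t, 0 ≤ t →
      deriv (fun s => (y' s + G (y s)) ^ 2 + 4 * F (y s) + (y' s) ^ 2) t
        ≤ -(f (y t) * G (y t)) - g0 * (y' t) ^ 2
          + (⨆ r : ℝ, G r * (2 * d' t - f r)) + 4 * (d' t) ^ 2 / g0 := by
  intro t _
  rw [(hasDerivAt_lyapunov (hF (y t)) (hG (y t)) (hy t) (hy' t)).deriv]
  have hV' : 2 * (y' t + G (y t)) * (y'' t + g (y t) * y' t) + 4 * (f (y t) * y' t)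
        + 2 * y' t * y'' t
      = G (y t) * (2 * d' t - f (y t)) - f (y t) * G (y t) + 4 * (y' t * d' t)
        - 2 * g (y t) * y' t ^ 2 := by
    rw [show y'' t = d' t - g (y t) * y' t - f (y t) by linarith [hode t]]
    ring
  have hsup : G (y t) * (2 * d' t - f (y t)) ≤ ⨆ r : ℝ, G r * (2 * d' t - f r) :=
    le_ciSup (hψ (d' t)) (y t)
  have hdamp : g0 * y' t ^ 2 ≤ g (y t) * y' t ^ 2 :=
    mul_le_mul_of_nonneg_right (hg (y t)) (sq_nonneg _)
  linarith [four_mul_mul_sub_mul_sq_le hg0 (y' t) (d' t)]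

theorem stmt_11 (g0 : ℝ) (hg0 : 0 < g0) (F G f g : ℝ → ℝ)
    (hF0 : F 0 = 0) (hG0 : G 0 = 0)
    (hF : ∀ r, HasDerivAt F (f r) r) (hG : ∀ r, HasDerivAt G (g r) r)
    (hg : ∀ r, g0 ≤ g r) (hf : ∀ r, r ≠ 0 → 0 < r * f r)
    (y y' y'' d d' : ℝ → ℝ)
    (hy : ∀ t, HasDerivAt y (y' t) t)
    (hy' : ∀ t, HasDerivAt y' (y'' t) t)
    (hd : ∀ t, HasDerivAt d (d' t) t)
    (hode : ∀ t, y'' t + g (y t) * y' t + f (y t) = d' t)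
    (hψ : ∀ s : ℝ, BddAbove (Set.range fun r => G r * (2 * s - f r))) :
    ∀ t, 0 ≤ t →
      deriv (fun s => (y' s + G (y s)) ^ 2 + 4 * F (y s) + (y' s) ^ 2) t
        ≤ -(f (y t) * G (y t)) - g0 * (y' t) ^ 2
          + (⨆ r : ℝ, G r * (2 * d' t - f r)) + 4 * (d' t) ^ 2 / g0 :=
  stmt_11_general g0 hg0 F G f g hF hG hg y y' y'' d' hy hy' hode hψ
end

section
/- Let k_p, k_i, k_s > 0. For every real s, sup_{r∈ℝ} { k_p·r·(2s − k_i·r − k_s·sgn(r)) } = k_p·(max(|2s| − k_s, 0))² / (4·k_i). -/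
/-! Since `r * sign r = |r|`, the gain is `kp * (r * (2s - ks * sign r) - ki * r ^ 2)`, and
`r * (2s - ks * sign r) ≤ (|2s| - ks) * |r|` with equality for `r` of the sign of `s`. So the
supremum is that of `kp * (c * t - ki * t ^ 2)` over `t = |r| ≥ 0` with `c = max (|2s| - ks) 0`,
attained at `t = c / (2 ki)`. -/

open Real Set

lemma Real.mul_sign_eq_abs (r : ℝ) : r * sign r = |r| := by
  rcases lt_trichotomy r 0 with hr | rfl | hr
  · rw [sign_of_neg hr, abs_of_neg hr, mul_neg_one]
  · rw [sign_zero, mul_zero, abs_zero]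
  · rw [sign_of_pos hr, abs_of_pos hr, mul_one]

lemma mul_sub_mul_sign_le (a b r : ℝ) : r * (a - b * sign r) ≤ max (|a| - b) 0 * |r| :=
  calc r * (a - b * sign r) = r * a - b * |r| := by rw [← mul_sign_eq_abs]; ring
    _ ≤ |a| * |r| - b * |r| :=
        sub_le_sub_right (by rw [mul_comm r a, ← abs_mul]; exact le_abs_self _) _
    _ = (|a| - b) * |r| := by ring
    _ ≤ max (|a| - b) 0 * |r| := by gcongr; exact le_max_left _ _

lemma exists_abs_eq_mul_sub_mul_sign_eq (a b : ℝ) {t : ℝ} (ht : 0 ≤ t) :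
    ∃ r, |r| = t ∧ r * (a - b * sign r) = (|a| - b) * t := by
  rcases ht.eq_or_lt with rfl | ht
  · exact ⟨0, by simp⟩
  rcases le_or_gt 0 a with ha | ha
  · refine ⟨t, abs_of_pos ht, ?_⟩
    rw [sign_of_pos ht, abs_of_nonneg ha]; ring
  · refine ⟨-t, by rw [abs_neg, abs_of_pos ht], ?_⟩
    rw [sign_of_neg (neg_neg_of_pos ht), abs_of_neg ha]; ring

lemma mul_sub_mul_sq_le {k : ℝ} (hk : 0 < k) (c t : ℝ) :
    c * t - k * t ^ 2 ≤ c ^ 2 / (4 * k) := by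
  rw [le_div_iff₀ (by positivity)]
  nlinarith [sq_nonneg (c - 2 * k * t)]

lemma mul_div_sub_mul_div_sq {k : ℝ} (hk : 0 < k) (c : ℝ) :
    c * (c / (2 * k)) - k * (c / (2 * k)) ^ 2 = c ^ 2 / (4 * k) := by
  field_simp; ring

theorem isGreatest_range_mul_sub_mul_sign {kp ki : ℝ} (hkp : 0 < kp) (hki : 0 < ki) (a b : ℝ) :
    IsGreatest (range fun r : ℝ => kp * r * (a - ki * r - b * sign r))
      (kp * max (|a| - b) 0 ^ 2 / (4 * ki)) := by
  set c := max (|a| - b) 0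
  have gain_eq (r : ℝ) :
      kp * r * (a - ki * r - b * sign r) = kp * (r * (a - b * sign r) - ki * r ^ 2) := by
    ring
  simp only [gain_eq, mul_div_assoc]
  refine ⟨?_, forall_mem_range.2 fun r ↦ ?_⟩
  · rcases le_total (|a| - b) 0 with hab | hab
    · exact ⟨0, by simp [c, max_eq_right hab]⟩
    have hc_eq : c = |a| - b := max_eq_left hab
    obtain ⟨r, hr_abs, hr⟩ :=
      exists_abs_eq_mul_sub_mul_sign_eq a b (t := c / (2 * ki)) (by positivity)
    refine ⟨r, ?_⟩
    simp only [hr, ← sq_abs r, hr_abs, ← hc_eq, mul_div_sub_mul_div_sq hki]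
  · gcongr
    calc r * (a - b * sign r) - ki * r ^ 2 ≤ c * |r| - ki * |r| ^ 2 := by
          rw [sq_abs]; exact sub_le_sub_right (mul_sub_mul_sign_le a b r) _
      _ ≤ c ^ 2 / (4 * ki) := mul_sub_mul_sq_le hki c |r|

theorem stmt_12_general (kp ki ks : ℝ) (hkp : 0 < kp) (hki : 0 < ki) (s : ℝ) :
    (⨆ r : ℝ, kp * r * (2 * s - ki * r - ks * Real.sign r))
      = kp * (max (|2 * s| - ks) 0) ^ 2 / (4 * ki) :=
  (isGreatest_range_mul_sub_mul_sign hkp hki (2 * s) ks).isLUB.ciSup_eq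

theorem stmt_12 (kp ki ks : ℝ) (hkp : 0 < kp) (hki : 0 < ki) (hks : 0 < ks) (s : ℝ) :
    (⨆ r : ℝ, kp * r * (2 * s - ki * r - ks * Real.sign r))
      = kp * (max (|2 * s| - ks) 0) ^ 2 / (4 * ki) :=
  stmt_12_general kp ki ks hkp hki s
end

section
/- Suppose y : [0,∞) → ℝ is continuously differentiable, ∫₀^∞ α(|y(t)|) dt < ∞ where α is continuous, nondecreasing, and zero only at zero, and ∫₀^∞ |ẏ(t)|ᵖ dt < ∞ for some p ≥ 1. Then y(t) → 0 as t → ∞. -/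
open MeasureTheory intervalIntegral Filter Set

lemma tail_small_aux (f : ℝ → ℝ) (hf : MeasureTheory.IntegrableOn f (Set.Ici 0))
    (hnn : ∀ t, 0 ≤ f t) {η : ℝ} (hη : 0 < η) :
    ∃ T : ℝ, 0 ≤ T ∧ ∀ a b : ℝ, T ≤ a → a ≤ b → ∫ t in a..b, f t ≤ η := by
  have hI : Tendsto (fun b : ℝ => ∫ t in (0:ℝ)..b, f t) atTop
      (nhds (∫ t in Set.Ici (0:ℝ), f t)) := by
    rw [MeasureTheory.integral_Ici_eq_integral_Ioi]
    exact MeasureTheory.intervalIntegral_tendsto_integral_Ioi 0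
      (hf.mono_set Set.Ioi_subset_Ici_self) tendsto_id
  set I := ∫ t in Set.Ici (0:ℝ), f t with hIdef
  have hev : ∀ᶠ b in atTop, I - η < ∫ t in (0:ℝ)..b, f t :=
    hI.eventually (eventually_gt_nhds (by linarith))
  obtain ⟨T0, hT0⟩ := hev.exists_forall_of_atTop
  refine ⟨max T0 0, le_max_right _ _, fun a b ha hab => ?_⟩
  have ha0 : (0:ℝ) ≤ a := le_trans (le_max_right _ _) ha
  have hb0 : (0:ℝ) ≤ b := le_trans ha0 hab
  have hia : IntervalIntegrable f volume 0 a := by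
    apply MeasureTheory.IntegrableOn.intervalIntegrable
    exact hf.mono_set (by rw [Set.uIcc_of_le ha0]; exact Set.Icc_subset_Ici_self)
  have hib : IntervalIntegrable f volume a b := by
    apply MeasureTheory.IntegrableOn.intervalIntegrable
    refine hf.mono_set ?_
    rw [Set.uIcc_of_le hab]
    exact (Set.Icc_subset_Ici_self).trans (Set.Ici_subset_Ici.mpr ha0)
  have hsplit : (∫ t in (0:ℝ)..a, f t) + (∫ t in a..b, f t) = ∫ t in (0:ℝ)..b, f t :=
    intervalIntegral.integral_add_adjacent_intervals hia hib
  have hFb_le : (∫ t in (0:ℝ)..b, f t) ≤ I := by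
    rw [intervalIntegral.integral_of_le hb0]
    refine MeasureTheory.setIntegral_mono_set hf ?_ ?_
    · exact Filter.Eventually.of_forall hnn
    · exact Filter.Eventually.of_forall fun x hx => le_of_lt hx.1
  have hFa_ge : I - η < ∫ t in (0:ℝ)..a, f t := hT0 a (le_trans (le_max_left _ _) ha)
  linarith

theorem stmt_13 (y y' : ℝ → ℝ) (α : ℝ → ℝ) (p : ℝ) (hp : 1 ≤ p)
    (hy : ∀ t, HasDerivAt y (y' t) t) (hy' : Continuous y')
    (hα : Continuous α) (hmono : Monotone α) (hα0 : α 0 = 0)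
    (hαpos : ∀ s : ℝ, 0 < s → 0 < α s)
    (hint : MeasureTheory.IntegrableOn (fun t => α |y t|) (Set.Ici 0))
    (hint' : MeasureTheory.IntegrableOn (fun t => |y' t| ^ p) (Set.Ici 0)) :
    Filter.Tendsto y Filter.atTop (nhds 0) := by
  have hycont : Continuous y := by
    rw [continuous_iff_continuousAt]; exact fun t => (hy t).continuousAt
  by_contra hcon
  rw [Metric.tendsto_atTop] at hcon
  push_neg at hcon
  obtain ⟨ε, hε, hfreq⟩ := hcon
  set δ : ℝ := min 1 (ε / 4) with hδdef
  have hδpos : 0 < δ := lt_min one_pos (by linarith)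
  have hδ1 : δ ≤ 1 := min_le_left _ _
  have hδε : δ ≤ ε / 4 := min_le_right _ _
  set c : ℝ := α (ε / 2) with hcdef
  have hcpos : 0 < c := hαpos _ (by linarith)
  have hαynn : ∀ t, 0 ≤ α |y t| := fun t => hα0 ▸ hmono (abs_nonneg _)
  obtain ⟨T₁, hT₁0, hT₁⟩ := tail_small_aux _ hint'
    (fun t => Real.rpow_nonneg (abs_nonneg _) p) (show (0:ℝ) < ε/4 by linarith)
  obtain ⟨T₂, hT₂0, hT₂⟩ := tail_small_aux _ hint hαynn
    (show (0:ℝ) < δ * c / 2 by positivity)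
  obtain ⟨t, ht, hdist⟩ := hfreq (max (T₁ + δ) (T₂ + δ))
  have hyt : ε ≤ |y t| := by rwa [Real.dist_eq, sub_zero] at hdist
  have ht1 : T₁ ≤ t - δ := by
    have := le_trans (le_max_left (T₁ + δ) (T₂ + δ)) ht; linarith
  have ht2 : T₂ ≤ t - δ := by
    have := le_trans (le_max_right (T₁ + δ) (T₂ + δ)) ht; linarith
  -- |y'| ≤ 1 + |y'|^p pointwise
  have hptwise : ∀ x : ℝ, |y' x| ≤ 1 + |y' x| ^ p := by
    intro x
    rcases le_total (|y' x|) 1 with h | h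
    · have : (0:ℝ) ≤ |y' x| ^ p := Real.rpow_nonneg (abs_nonneg _) p
      linarith
    · have h1 : |y' x| = |y' x| ^ (1:ℝ) := (Real.rpow_one _).symm
      have h2 : |y' x| ^ (1:ℝ) ≤ |y' x| ^ p :=
        Real.rpow_le_rpow_of_exponent_le h hp
      rw [Real.rpow_one] at h2
      linarith
  have hrpowcont : Continuous fun x => |y' x| ^ p :=
    (continuous_abs.comp hy').rpow_const (fun x => Or.inr (by linarith))
  -- key: |y s| ≥ ε/2 on [t-δ, t]
  have hkey : ∀ s ∈ Set.Icc (t - δ) t, ε / 2 ≤ |y s| := by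
    intro s ⟨hs1, hs2⟩
    have hftc : ∫ x in s..t, y' x = y t - y s :=
      intervalIntegral.integral_eq_sub_of_hasDerivAt (fun x _ => hy x)
        (hy'.intervalIntegrable s t)
    have habs : |y t - y s| ≤ ∫ x in s..t, |y' x| := by
      rw [← hftc]
      exact intervalIntegral.abs_integral_le_integral_abs hs2
    have hmono' : (∫ x in s..t, |y' x|) ≤ ∫ x in s..t, (1 + |y' x| ^ p) := by
      apply intervalIntegral.integral_mono_on hs2
        ((continuous_abs.comp hy').intervalIntegrable s t)
        ((continuous_const.add hrpowcont).intervalIntegrable s t)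
      exact fun x _ => hptwise x
    have hsum : (∫ x in s..t, (1 + |y' x| ^ p))
        = (t - s) + ∫ x in s..t, |y' x| ^ p := by
      rw [intervalIntegral.integral_add (intervalIntegrable_const)
        (hrpowcont.intervalIntegrable s t), intervalIntegral.integral_const]
      simp
    have htail : (∫ x in s..t, |y' x| ^ p) ≤ ε / 4 :=
      hT₁ s t (le_trans ht1 hs1) hs2
    have hts : t - s ≤ δ := by linarith
    have hdiff : |y t - y s| ≤ ε / 2 := by
      calc |y t - y s| ≤ ∫ x in s..t, |y' x| := habs
        _ ≤ (t - s) + ∫ x in s..t, |y' x| ^ p := by rw [← hsum]; exact hmono'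
        _ ≤ δ + ε / 4 := by linarith
        _ ≤ ε / 2 := by linarith
    have : |y t| - |y s| ≤ |y t - y s| := abs_sub_abs_le_abs_sub _ _
    linarith
  -- lower bound the cost integral on [t-δ, t]
  have hlow : δ * c ≤ ∫ s in (t - δ)..t, α |y s| := by
    have : (∫ _ in (t - δ)..t, c) ≤ ∫ s in (t - δ)..t, α |y s| := by
      apply intervalIntegral.integral_mono_on (by linarith)
        intervalIntegrable_const
        ((hα.comp (continuous_abs.comp hycont)).intervalIntegrable _ _)
      intro s hs
      exact hmono (hkey s hs)
    rwa [intervalIntegral.integral_const, smul_eq_mul,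
      show t - (t - δ) = δ by ring] at this
  have hhigh : (∫ s in (t - δ)..t, α |y s|) ≤ δ * c / 2 :=
    hT₂ (t - δ) t ht2 (by linarith)
  have : 0 < δ * c := mul_pos hδpos hcpos
  linarith
end

section
/- Let f(r) = k_i·r + k_s·sgn(r) and G(r) = k_p·r with k_p, k_i, k_s > 0. For every s, and every r, G(r)·(2s − f(r)) + g₀·t² − 4·t·s is bounded above over (r,t) ∈ ℝ² by k_p·max(|2s|−k_s,0)²/(4k_i) + 4s²/g₀ for any g₀ > 0. -/
theorem stmt_19 (kp ki ks g0 : ℝ) (hkp : 0 < kp) (hki : 0 < ki) (hks : 0 < ks)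
    (hg0 : 0 < g0) (s : ℝ) :
    ∀ r t : ℝ,
      kp * r * (2 * s - (ki * r + ks * Real.sign r)) + 4 * t * s - g0 * t ^ 2
        ≤ kp * (max (|2 * s| - ks) 0) ^ 2 / (4 * ki) + 4 * s ^ 2 / g0 := by
  intro r t
  set M := max (|2 * s| - ks) 0 with hMdef
  have hM0 : 0 ≤ M := le_max_right _ _
  have hM1 : |2 * s| - ks ≤ M := le_max_left _ _
  have habs1 : 2 * s ≤ |2 * s| := le_abs_self _
  have habs2 : -(2 * s) ≤ |2 * s| := neg_le_abs _
  have hB : 4 * t * s - g0 * t ^ 2 ≤ 4 * s ^ 2 / g0 := by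
    rw [le_div_iff₀ hg0]
    nlinarith [sq_nonneg (g0 * t - 2 * s)]
  have hA : r * (2 * s - (ki * r + ks * Real.sign r)) ≤ M ^ 2 / (4 * ki) := by
    rw [le_div_iff₀ (by positivity : (0:ℝ) < 4 * ki)]
    rcases lt_trichotomy r 0 with h | h | h
    · rw [Real.sign_of_neg h]
      nlinarith [sq_nonneg (2 * ki * r + M), mul_nonneg hki.le (sq_nonneg r),
        mul_nonpos_of_nonpos_of_nonneg h.le (by linarith : (0:ℝ) ≤ 2 * s + ks + M)]
    · simp [h]
      positivity
    · rw [Real.sign_of_pos h]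
      nlinarith [sq_nonneg (2 * ki * r - M), mul_nonneg hki.le (sq_nonneg r),
        mul_nonneg h.le (by linarith : (0:ℝ) ≤ -(2 * s) + ks + M)]
  have hA' : kp * r * (2 * s - (ki * r + ks * Real.sign r)) ≤ kp * M ^ 2 / (4 * ki) := by
    rw [mul_assoc, mul_div_assoc]
    exact mul_le_mul_of_nonneg_left hA hkp.le
  linarith
end
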